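/- Let d ≥ 1 and let ρ be a symmetric probability measure on ℝ^d such that ρ(H) < 1/√e for every vector hyperplane H of ℝ^d. Then for every n ≥ d, the normalization constant Z_n = ∫_{D_n^+} exp((1/2)⟨(∑_{i=1}^n x_i ᵗx_i)^{-1}(∑_{i=1}^n x_i), ∑_{i=1}^n x_i⟩) ∏_{i=1}^n dρ(x_i) satisfies 0 < Z_n ≤ e^{n/2}; in particular the model μ̃_{n,ρ} is well-defined. -/

import Mathlib

open MeasureTheory Filter Matrix Real

noncomputable section

/-- `T_n(x) = ∑ i, x_i ᵗx_i`. -/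
def Tmat (d n : ℕ) (x : Fin n → Fin d → ℝ) : Matrix (Fin d) (Fin d) ℝ :=
  ∑ i, Matrix.vecMulVec (x i) (x i)

/-- `S_n(x) = x_1 + … + x_n`. -/
def Svec (d n : ℕ) (x : Fin n → Fin d → ℝ) : Fin d → ℝ := ∑ i, x i

/-- the Hamiltonian `(1/2)⟨T_n⁻¹ S_n, S_n⟩`. -/
def Hfun (d n : ℕ) (x : Fin n → Fin d → ℝ) : ℝ :=
  (1 / 2) * dotProduct ((Tmat d n x)⁻¹.mulVec (Svec d n x)) (Svec d n x)

/-- normalization constant `Z_n`. -/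
def Zconst (d : ℕ) (ρ : Measure (Fin d → ℝ)) (n : ℕ) : ℝ :=
  ∫ x : Fin n → Fin d → ℝ,
    Set.indicator {x | 0 < (Tmat d n x).det} (fun x => Real.exp (Hfun d n x)) x
    ∂ Measure.pi fun _ => ρ

/-- the Curie-Weiss model of SOC `μ̃_{n,ρ}`. -/
def CW (d : ℕ) (ρ : Measure (Fin d → ℝ)) (n : ℕ) : Measure (Fin n → Fin d → ℝ) :=
  (Measure.pi fun _ => ρ).withDensity fun x =>
    Set.indicator {x | 0 < (Tmat d n x).det}
      (fun x => ENNReal.ofReal (Real.exp (Hfun d n x) / Zconst d ρ n)) x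

/-- covariance matrix `Σ = ∫ z ᵗz dρ(z)`. -/
def covM (d : ℕ) (ρ : Measure (Fin d → ℝ)) : Matrix (Fin d) (Fin d) ℝ :=
  Matrix.of fun i j => ∫ z, z i * z j ∂ρ

/-- `M₄(z) = ∑ (∫ yᵢyⱼyₖyₗ dρ) zᵢzⱼzₖzₗ`. -/
def M4 (d : ℕ) (ρ : Measure (Fin d → ℝ)) (z : Fin d → ℝ) : ℝ :=
  ∑ i : Fin d, ∑ j : Fin d, ∑ k : Fin d, ∑ l : Fin d,
    (∫ y, y i * y j * y k * y l ∂ρ) * (z i * z j * z k * z l)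

/-- symmetric measure: invariant under `z ↦ -z`. -/
def SymMeas (d : ℕ) (ρ : Measure (Fin d → ℝ)) : Prop := ρ.map (fun z => -z) = ρ

/-- condition `(*)` : some Gaussian exponential moment. -/
def CondStar (d : ℕ) (ρ : Measure (Fin d → ℝ)) : Prop :=
  ∃ v₀ > (0:ℝ), Integrable (fun z => Real.exp (v₀ * dotProduct z z)) ρ

/-- the ρ-measure of every vector hyperplane is `< 1/√e`. -/
def HypLt (d : ℕ) (ρ : Measure (Fin d → ℝ)) : Prop :=
  ∀ s : Fin d → ℝ, s ≠ 0 →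
    ρ {z | dotProduct s z = 0} < ENNReal.ofReal (1 / Real.sqrt (Real.exp 1))

/-- non-degeneracy: the ρ-measure of every affine hyperplane is `< 1`. -/
def NonDeg (d : ℕ) (ρ : Measure (Fin d → ℝ)) : Prop :=
  ∀ s : Fin d → ℝ, s ≠ 0 → ∀ c : ℝ, ρ {z | dotProduct s z = c} < 1

-- positive square root of a positive semi-definite matrix (junk value otherwise).
open scoped Classical in
def psqrt (d : ℕ) (M : Matrix (Fin d) (Fin d) ℝ) : Matrix (Fin d) (Fin d) ℝ :=
  if h : M.PosSemidef then (h.1.eigenvectorUnitary : Matrix (Fin d) (Fin d) ℝ) *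
    diagonal ((↑) ∘ (√·) ∘ h.1.eigenvalues) * (star h.1.eigenvectorUnitary : Matrix (Fin d) (Fin d) ℝ)
    else 0

/-- Euclidean norm on `ℝ^d`. -/
def vnorm (d : ℕ) (v : Fin d → ℝ) : ℝ := Real.sqrt (dotProduct v v)

/-- Frobenius norm on `d × d` matrices. -/
def mnorm (d : ℕ) (M : Matrix (Fin d) (Fin d) ℝ) : ℝ :=
  Real.sqrt (∑ i : Fin d, ∑ j : Fin d, (M i j) ^ 2)

/-- the log-Laplace transform `Λ` of `(Z, Z ᵗZ)`, with values in `(-∞, +∞]`. -/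
def Lam (d : ℕ) (ρ : Measure (Fin d → ℝ)) (u : Fin d → ℝ)
    (A : Matrix (Fin d) (Fin d) ℝ) : EReal :=
  ENNReal.log (∫⁻ z, ENNReal.ofReal
    (Real.exp (dotProduct u z + dotProduct (A.mulVec z) z)) ∂ρ)

/-- the Cramér transform `I` of `(Z, Z ᵗZ)`. -/
def CramerI (d : ℕ) (ρ : Measure (Fin d → ℝ)) (x : Fin d → ℝ)
    (M : Matrix (Fin d) (Fin d) ℝ) : EReal :=
  ⨆ p : (Fin d → ℝ) × {A : Matrix (Fin d) (Fin d) ℝ // A.IsSymm},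
    ((dotProduct x p.1 + (M * (p.2 : Matrix (Fin d) (Fin d) ℝ)).trace : ℝ) : EReal)
      - Lam d ρ p.1 p.2

end

/-!
With `v = T⁻¹S`, twice the Hamiltonian is `⟨v, S⟩ = ⟨v, T v⟩ = ∑ ⟨x_i, v⟩² = ∑ ⟨x_i, v⟩`, so by
Cauchy–Schwarz `H ≤ n/2` on `D_n^+`. Hence `Z_n ≤ e^{n/2}`, and `Z_n > 0` as soon as `D_n^+` has
positive measure. Since `T = ᵗX X`, `det T > 0` exactly when the `x_i` span `ℝ^d`. Every proper
subspace lies in a vector hyperplane, of measure `< 1/√e < 1`, so each new sample avoids the span of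
the previous ones with positive probability; thus `d` samples are linearly independent, and `n ≥ d`
samples span `ℝ^d`, with positive probability.
-/

open Set

theorem Matrix.span_range_ne_top_iff_exists_dotProduct_eq_zero {K ι m : Type*} [Field K]
    [Fintype m] (x : ι → m → K) :
    Submodule.span K (range x) ≠ ⊤ ↔ ∃ v ≠ 0, ∀ i, x i ⬝ᵥ v = 0 := by
  classical
  constructor
  · intro h
    obtain ⟨f, hf, hle⟩ := (Submodule.span K (range x)).exists_le_ker_of_lt_top h.lt_top
    refine ⟨(dotProductEquiv K m).symm f, by simpa using hf, fun i => ?_⟩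
    rw [dotProduct_comm, ← dotProductEquiv_apply_apply, LinearEquiv.apply_symm_apply]
    exact hle (Submodule.subset_span ⟨i, rfl⟩)
  · rintro ⟨v, hv, hx⟩ htop
    have hle : Submodule.span K (range x) ≤ LinearMap.ker (dotProductEquiv K m v) :=
      Submodule.span_le.2 <| range_subset_iff.2 fun i => by simp [dotProduct_comm v, hx i]
    rw [htop, top_le_iff, LinearMap.ker_eq_top] at hle
    exact hv ((dotProductEquiv K m).map_eq_zero_iff.1 hle)

theorem MeasureTheory.Measure.pi_pos_of_forall_cons {α : Type*} [MeasurableSpace α]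
    (ρ : Measure α) [SigmaFinite ρ] {k : ℕ} {S : Set (Fin (k + 1) → α)} (hS : MeasurableSet S)
    {G : Set (Fin k → α)} (hG : 0 < Measure.pi (fun _ => ρ) G)
    (hslice : ∀ y ∈ G, 0 < ρ {z | Fin.cons z y ∈ S}) :
    0 < Measure.pi (fun _ => ρ) S := by
  let e := MeasurableEquiv.piFinSuccAbove (fun _ : Fin (k + 1) => α) 0
  have hT : MeasurableSet (e.symm ⁻¹' S) := e.symm.measurable hS
  rw [← ((measurePreserving_piFinSuccAbove (fun _ => ρ) 0).symm).measure_preimage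
    hS.nullMeasurableSet, Measure.prod_apply_symm hT,
    lintegral_pos_iff_support (measurable_measure_prodMk_right hT)]
  refine hG.trans_le (measure_mono fun y hy => ?_)
  convert (hslice y hy).ne' using 3
  ext z
  simp [e, Fin.insertNthEquiv, Fin.insertNth_zero']

theorem MeasureTheory.Measure.pi_linearIndependent_pos {E : Type*} [NormedAddCommGroup E]
    [NormedSpace ℝ E] [FiniteDimensional ℝ E] [MeasurableSpace E] [BorelSpace E]
    (ρ : Measure E) [IsProbabilityMeasure ρ]
    (hρ : ∀ V : Submodule ℝ E, V ≠ ⊤ → ρ V < 1) {k : ℕ} (hk : k ≤ Module.finrank ℝ E) :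
    0 < Measure.pi (fun _ : Fin k => ρ) {y | LinearIndependent ℝ y} := by
  induction k with
  | zero => simp
  | succ k ih =>
    refine pi_pos_of_forall_cons ρ isOpen_setOfPred_linearIndependent.measurableSet
      (ih (by omega)) fun y hy => ?_
    set V := Submodule.span ℝ (range y) with hV_def
    have hV : V ≠ ⊤ := by
      intro htop
      have := finrank_span_eq_card hy
      rw [← hV_def, htop, finrank_top, Fintype.card_fin] at this
      omega
    have hslice : {z | Fin.cons z y ∈ {y : Fin (k + 1) → E | LinearIndependent ℝ y}} =
        (V : Set E)ᶜ := by
      ext z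
      simp only [mem_ofPred_eq, linearIndependent_finCons, mem_compl_iff, SetLike.mem_coe]
      exact and_iff_right hy
    rw [hslice, measure_compl V.closed_of_finiteDimensional.measurableSet (measure_ne_top ρ _),
      measure_univ]
    exact tsub_pos_of_lt (hρ V hV)

section Tmat

variable {d n : ℕ}

lemma Tmat_eq_transpose_mul (x : Fin n → Fin d → ℝ) : Tmat d n x = (of x)ᵀ * of x := by
  ext k l
  simp [Tmat, Matrix.mul_apply, Matrix.sum_apply, vecMulVec_apply]

lemma dotProduct_Tmat_mulVec (x : Fin n → Fin d → ℝ) (v : Fin d → ℝ) :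
    v ⬝ᵥ (Tmat d n x *ᵥ v) = ∑ i, (x i ⬝ᵥ v) ^ 2 := by
  rw [Tmat_eq_transpose_mul, ← mulVec_mulVec, dotProduct_mulVec, vecMul_transpose]
  simp only [dotProduct, sq]
  rfl

lemma dotProduct_Svec (x : Fin n → Fin d → ℝ) (v : Fin d → ℝ) :
    v ⬝ᵥ Svec d n x = ∑ i, x i ⬝ᵥ v := by
  rw [Svec, dotProduct_comm, sum_dotProduct]

lemma Hfun_le (x : Fin n → Fin d → ℝ) (hx : (Tmat d n x).det ≠ 0) : Hfun d n x ≤ n / 2 := by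
  set v := (Tmat d n x)⁻¹ *ᵥ Svec d n x
  have hTv : Tmat d n x *ᵥ v = Svec d n x := by
    rw [mulVec_mulVec, mul_nonsing_inv _ hx.isUnit, one_mulVec]
  have hq_sq : v ⬝ᵥ Svec d n x = ∑ i, (x i ⬝ᵥ v) ^ 2 := by rw [← hTv, dotProduct_Tmat_mulVec]
  have hq_sum : v ⬝ᵥ Svec d n x = ∑ i, x i ⬝ᵥ v := dotProduct_Svec x v
  set q := v ⬝ᵥ Svec d n x
  have hq_nonneg : 0 ≤ q := hq_sq ▸ Finset.sum_nonneg fun i _ => sq_nonneg _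
  have hcs : q ^ 2 ≤ n * q := by
    have := sq_sum_le_card_mul_sum_sq (s := Finset.univ) (f := fun i => x i ⬝ᵥ v)
    rwa [← hq_sum, ← hq_sq, Finset.card_univ, Fintype.card_fin] at this
  have hq_le : q ≤ n := by nlinarith
  change 1 / 2 * q ≤ n / 2
  linarith

lemma det_Tmat_pos_iff (x : Fin n → Fin d → ℝ) :
    0 < (Tmat d n x).det ↔ Submodule.span ℝ (range x) = ⊤ := by
  have hpsd : (Tmat d n x).PosSemidef := by
    simpa [Tmat_eq_transpose_mul] using posSemidef_conjTranspose_mul_self (of x)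
  have hker (v : Fin d → ℝ) : Tmat d n x *ᵥ v = 0 ↔ ∀ i, x i ⬝ᵥ v = 0 := by
    have := congrArg (v ∈ ·) (ker_mulVecLin_transpose_mul_self (of x))
    simp only [LinearMap.mem_ker, mulVecLin_apply, eq_iff_iff] at this
    rw [Tmat_eq_transpose_mul, this, funext_iff]
    rfl
  rw [hpsd.det_nonneg.lt_iff_ne', ne_eq, ← exists_mulVec_eq_zero_iff, ← not_ne_iff,
    span_range_ne_top_iff_exists_dotProduct_eq_zero]
  simp only [hker]

lemma continuous_Tmat : Continuous (Tmat d n) := by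
  unfold Tmat
  fun_prop

lemma continuous_Svec : Continuous (Svec d n) := by
  unfold Svec
  fun_prop

lemma measurableSet_det_Tmat_pos :
    MeasurableSet {x : Fin n → Fin d → ℝ | 0 < (Tmat d n x).det} :=
  (isOpen_lt continuous_const continuous_Tmat.matrix_det).measurableSet

lemma continuousOn_Hfun : ContinuousOn (Hfun d n) {x | (Tmat d n x).det ≠ 0} := by
  intro x hx
  have hinv : ContinuousAt (fun x => (Tmat d n x)⁻¹) x := by
    refine (continuousAt_matrix_inv _ ?_).comp continuous_Tmat.continuousAt
    rw [Ring.inverse_eq_inv']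
    exact continuousAt_inv₀ hx
  have hform : Continuous fun p : Matrix (Fin d) (Fin d) ℝ × (Fin d → ℝ) =>
      1 / 2 * (p.1 *ᵥ p.2 ⬝ᵥ p.2) := by
    fun_prop
  exact (hform.continuousAt.comp (hinv.prodMk continuous_Svec.continuousAt)).continuousWithinAt

end Tmat

lemma HypLt.measure_lt_one {d : ℕ} {ρ : Measure (Fin d → ℝ)} (hρ : HypLt d ρ)
    (V : Submodule ℝ (Fin d → ℝ)) (hV : V ≠ ⊤) : ρ V < 1 := by
  obtain ⟨s, hs, hsV⟩ :=
    (span_range_ne_top_iff_exists_dotProduct_eq_zero (Subtype.val : V → Fin d → ℝ)).1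
      (by simpa using hV)
  calc ρ V ≤ ρ {z | s ⬝ᵥ z = 0} := measure_mono fun z hz => by
        simpa [dotProduct_comm] using hsV ⟨z, hz⟩
    _ < ENNReal.ofReal (1 / √(rexp 1)) := hρ s hs
    _ < 1 := by
      rw [ENNReal.ofReal_lt_one, div_lt_one (by positivity), Real.lt_sqrt zero_le_one]
      simp

lemma pi_det_Tmat_pos {d : ℕ} (ρ : Measure (Fin d → ℝ)) [IsProbabilityMeasure ρ]
    (hρ : ∀ V : Submodule ℝ (Fin d → ℝ), V ≠ ⊤ → ρ V < 1) {n : ℕ} (hn : d ≤ n) :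
    0 < Measure.pi (fun _ : Fin n => ρ) {x | 0 < (Tmat d n x).det} := by
  induction n, hn using Nat.le_induction with
  | base =>
    refine (Measure.pi_linearIndependent_pos ρ hρ (by simp)).trans_le
      (measure_mono fun y hy => ?_)
    rw [mem_ofPred_eq, det_Tmat_pos_iff]
    exact LinearIndependent.span_eq_top_of_card_eq_finrank' hy (by simp)
  | succ n _ ih =>
    refine Measure.pi_pos_of_forall_cons ρ measurableSet_det_Tmat_pos ih fun y hy => ?_
    suffices {z | 0 < (Tmat d (n + 1) (Fin.cons z y)).det} = univ by simp [this]
    refine eq_univ_of_forall fun z => ?_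
    rw [mem_ofPred_eq, det_Tmat_pos_iff, Fin.range_cons, eq_top_iff,
      ← (det_Tmat_pos_iff y).1 hy]
    exact Submodule.span_mono (subset_insert _ _)

lemma indicator_exp_Hfun_le {d n : ℕ} (x : Fin n → Fin d → ℝ) :
    {x | 0 < (Tmat d n x).det}.indicator (fun x => rexp (Hfun d n x)) x ≤ rexp (n / 2) := by
  by_cases hx : 0 < (Tmat d n x).det
  · simpa [hx] using Hfun_le x hx.ne'
  · simp [hx, (exp_pos _).le]

lemma integrable_indicator_exp_Hfun {d n : ℕ} (μ : Measure (Fin n → Fin d → ℝ))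
    [IsFiniteMeasure μ] :
    Integrable ({x | 0 < (Tmat d n x).det}.indicator fun x => rexp (Hfun d n x)) μ := by
  refine Integrable.of_bound ((aestronglyMeasurable_indicator_iff measurableSet_det_Tmat_pos).2
    ((continuousOn_Hfun.rexp.mono fun x hx => ne_of_gt hx).aestronglyMeasurable
      measurableSet_det_Tmat_pos)) (rexp (n / 2)) (ae_of_all _ fun x => ?_)
  rw [Real.norm_of_nonneg (indicator_nonneg (fun _ _ => (exp_pos _).le) x)]
  exact indicator_exp_Hfun_le x

theorem Zconst_pos_le_general
    (d : ℕ) (ρ : Measure (Fin d → ℝ)) [IsProbabilityMeasure ρ]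
    (hhyp : HypLt d ρ) :
    ∀ n : ℕ, d ≤ n → 0 < Zconst d ρ n ∧ Zconst d ρ n ≤ Real.exp (n / 2) := by
  intro n hn
  have hint := integrable_indicator_exp_Hfun (Measure.pi fun _ : Fin n => ρ)
  refine ⟨?_, ?_⟩
  · rw [Zconst, integral_pos_iff_support_of_nonneg (indicator_nonneg fun _ _ => (exp_pos _).le)
      hint, support_indicator, Function.support_eq_univ fun x => (exp_pos _).ne', inter_univ]
    exact pi_det_Tmat_pos ρ hhyp.measure_lt_one hn
  · calc Zconst d ρ n ≤ ∫ _, rexp (n / 2) ∂Measure.pi fun _ => ρ :=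
          integral_mono hint (integrable_const _) indicator_exp_Hfun_le
      _ = rexp (n / 2) := by simp

/-- the model is well defined: `0 < Z_n ≤ e^{n/2}` for all `n ≥ d`. -/
theorem Zconst_pos_le
    (d : ℕ) (hd : 1 ≤ d) (ρ : Measure (Fin d → ℝ)) [IsProbabilityMeasure ρ]
    (hsym : SymMeas d ρ) (hhyp : HypLt d ρ) :
    ∀ n : ℕ, d ≤ n → 0 < Zconst d ρ n ∧ Zconst d ρ n ≤ Real.exp (n / 2) :=
  Zconst_pos_le_general d ρ hhyp
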